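/- Let n ≥ 2 and let W = {±1}^n ⋊ S_n act on ℝ^n by signed permutations of the coordinates (the common Weyl group of the root systems B_n and C_n). Let b = e₁ = (1, 0, …, 0) and let W_b ≅ {±1}^{n−1} ⋊ S_{n−1} be its stabilizer in W. Then every W_b-invariant polynomial function on ℝ^n lies in the ℝ-subalgebra generated by the W-invariant polynomial functions f together with their translates v ↦ f(v + b). -/

import Mathlib

open scoped RealInnerProductSpace

/-- The signed permutation `(ε, σ)` acting on `ℝ^n`: `x ↦ (ε i * x (σ i))_i`. -/
noncomputable def sgnPerm {n : ℕ} (ε : Fin n → ℝ) (σ : Equiv.Perm (Fin n))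
    (x : EuclideanSpace ℝ (Fin n)) : EuclideanSpace ℝ (Fin n) :=
  (WithLp.toLp 2 (fun i => ε i * x (σ i)) : EuclideanSpace ℝ (Fin n))

/-- A polynomial function on a real vector space `M`: an element of the `ℝ`-subalgebra of
`M → ℝ` generated by the linear functionals. -/
def IsPolyFun {M : Type*} [AddCommGroup M] [Module ℝ M] (f : M → ℝ) : Prop :=
  f ∈ Algebra.adjoin ℝ {g : M → ℝ | ∃ l : M →ₗ[ℝ] ℝ, g = ⇑l}

/-- Invariance of `f : ℝ^n → ℝ` under the group `W = {±1}^n ⋊ S_n` of all signed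
permutations of the coordinates. -/
def IsWInv {n : ℕ} (f : EuclideanSpace ℝ (Fin n) → ℝ) : Prop :=
  ∀ (ε : Fin n → ℝ), (∀ i, ε i = 1 ∨ ε i = -1) → ∀ σ : Equiv.Perm (Fin n),
    ∀ x, f (sgnPerm ε σ x) = f x

/-- Invariance of `f : ℝ^n → ℝ` under the group `W° = {±1}°^n ⋊ S_n` of signed
permutations with an even number of sign changes (`∏ ε i = 1`). -/
def IsW0Inv {n : ℕ} (f : EuclideanSpace ℝ (Fin n) → ℝ) : Prop :=
  ∀ (ε : Fin n → ℝ), (∀ i, ε i = 1 ∨ ε i = -1) → (∏ i, ε i = 1) →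
    ∀ σ : Equiv.Perm (Fin n), ∀ x, f (sgnPerm ε σ x) = f x

/-!
Split off the coordinate `x₀` fixed by `W_b`: a `W_b`-invariant polynomial is a polynomial in `x₀`
whose coefficients are polynomials in `x₁, …, x_{n-1}` invariant under all signed permutations of
these variables. Such a polynomial is even in every variable, hence a symmetric polynomial in the
squares, i.e. a polynomial in `e_k(x₁², …, x_{n-1}²)`. Both `x₀` and these come from
`W`-invariants: `2 x₀ = ‖x + b‖² - ‖x‖² - 1`, and
`e_{k+1}(x₀², …, x_{n-1}²) = e_{k+1}(x₁², …, x_{n-1}²) + x₀² e_k(x₁², …, x_{n-1}²)`.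
-/

open MvPolynomial

theorem Multiset.esymm_cons_succ {R : Type*} [CommSemiring R] (a : R) (s : Multiset R) (k : ℕ) :
    (a ::ₘ s).esymm (k + 1) = s.esymm (k + 1) + a * s.esymm k := by
  simp [Multiset.esymm, Multiset.powersetCard_cons, Multiset.sum_map_mul_left]

namespace MvPolynomial

variable {ι R : Type*}

section CommSemiring
variable [CommSemiring R]

theorem esymm_fin_succ (m k : ℕ) :
    esymm (Fin (m + 1)) R (k + 1) =
      rename Fin.succ (esymm (Fin m) R (k + 1)) + X 0 * rename Fin.succ (esymm (Fin m) R k) := by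
  have hrename (j : ℕ) : rename Fin.succ (esymm (Fin m) R j) =
      (Finset.univ.val.map fun i : Fin m => (X i.succ : MvPolynomial (Fin (m + 1)) R)).esymm j := by
    rw [← aeval_X_left_apply (rename _ _), aeval_rename, aeval_esymm_eq_multiset_esymm]
    rfl
  rw [hrename, hrename, esymm_eq_multiset_esymm, Fin.univ_val_map, List.ofFn_succ,
    ← Multiset.cons_coe, Multiset.esymm_cons_succ, ← Fin.univ_val_map]

theorem mem_range_expand_of_dvd {n : ℕ} {p : MvPolynomial ι R}
    (h : ∀ d ∈ p.support, ∀ i, n ∣ d i) :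
    p ∈ (expand n : MvPolynomial ι R →ₐ[R] _).range := by
  rw [p.as_sum]
  refine Subalgebra.sum_mem _ fun d hd =>
    ⟨monomial (Finsupp.mapRange (· / n) (Nat.zero_div n) d) (coeff d p), ?_⟩
  change expand n _ = _
  rw [expand_monomial, (Finsupp.ext fun i => ?_ : n • _ = d)]
  simp [Nat.mul_div_cancel' (h d hd i)]

noncomputable def signedRename (ε : ι → R) (σ : Equiv.Perm ι) :
    MvPolynomial ι R →ₐ[R] MvPolynomial ι R :=
  aeval fun i => C (ε i) * X (σ i)

theorem eval_signedRename (ε : ι → R) (σ : Equiv.Perm ι) (x : ι → R) (p : MvPolynomial ι R) :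
    eval x (signedRename ε σ p) = eval (fun i => ε i * x (σ i)) p := by
  change aeval x (signedRename ε σ p) = aeval _ p
  rw [signedRename, ← AlgHom.comp_apply, comp_aeval]
  simp

theorem signedRename_expand_two {ε : ι → R} (hε : ∀ i, ε i ^ 2 = 1) (σ : Equiv.Perm ι)
    (p : MvPolynomial ι R) : signedRename ε σ (expand 2 p) = expand 2 (rename σ p) := by
  rw [← AlgHom.comp_apply, ← AlgHom.comp_apply]
  congr 1
  refine algHom_ext fun i => ?_
  simp only [AlgHom.comp_apply, expand_X, rename_X, signedRename]
  rw [map_pow, aeval_X, mul_pow, ← map_pow, hε, map_one, one_mul]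

theorem coeff_signedRename_one [Fintype ι] (ε : ι → R) (p : MvPolynomial ι R) (d : ι →₀ ℕ) :
    coeff d (signedRename ε 1 p) = (∏ i, ε i ^ d i) * coeff d p := by
  classical
  induction p using induction_on' with
  | monomial e c =>
    have hmonomial : signedRename ε 1 (monomial e c) = monomial e ((∏ i, ε i ^ e i) * c) := by
      rw [signedRename, aeval_monomial, Finsupp.prod_pow, monomial_eq, Finsupp.prod_pow]
      simp only [Equiv.Perm.one_apply, mul_pow, Finset.prod_mul_distrib, ← map_pow, ← map_prod,
        C_mul, algebraMap_eq]
      ring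
    rw [hmonomial, coeff_monomial, coeff_monomial]
    split_ifs with h
    · rw [h]
    · rw [mul_zero]
  | add p q hp hq => simp only [map_add, coeff_add, hp, hq, mul_add]

section Fin
variable {m : ℕ}

theorem finSuccEquiv_rename_succ (p : MvPolynomial (Fin m) R) :
    finSuccEquiv R m (rename Fin.succ p) = Polynomial.C p := by
  have : (finSuccEquiv R m).toAlgHom.comp (rename Fin.succ) = Polynomial.CAlgHom :=
    algHom_ext fun i => by simp [finSuccEquiv_X_succ]
  exact DFunLike.congr_fun this p

theorem finSuccEquiv_signedRename_cons (ε : Fin m → R) (σ : Equiv.Perm (Fin m))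
    (p : MvPolynomial (Fin (m + 1)) R) :
    finSuccEquiv R m (signedRename (Fin.cons 1 ε) (Equiv.Perm.decomposeFin.symm (0, σ)) p) =
      Polynomial.mapAlgHom (signedRename ε σ) (finSuccEquiv R m p) := by
  have : (finSuccEquiv R m).toAlgHom.comp
      (signedRename (Fin.cons 1 ε) (Equiv.Perm.decomposeFin.symm (0, σ))) =
      (Polynomial.mapAlgHom (signedRename ε σ)).comp (finSuccEquiv R m).toAlgHom :=
    algHom_ext fun i => by cases i using Fin.cases <;> simp [signedRename, finSuccEquiv_apply]
  exact DFunLike.congr_fun this p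

theorem mem_adjoin_insert_X_zero_of_coeff_finSuccEquiv_mem {T : Set (MvPolynomial (Fin m) R)}
    {p : MvPolynomial (Fin (m + 1)) R}
    (h : ∀ j, (finSuccEquiv R m p).coeff j ∈ Algebra.adjoin R T) :
    p ∈ Algebra.adjoin R (insert (X 0) (rename Fin.succ '' T)) := by
  rw [← (finSuccEquiv R m).symm_apply_apply p, (finSuccEquiv R m p).as_sum_support_C_mul_X_pow,
    map_sum]
  refine Subalgebra.sum_mem _ fun j _ => ?_
  rw [map_mul, map_pow, ← finSuccEquiv_X_zero, AlgEquiv.symm_apply_apply,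
    (finSuccEquiv R m).symm_apply_eq.2 (finSuccEquiv_rename_succ _).symm]
  refine mul_mem ?_ (pow_mem (Algebra.subset_adjoin (Set.mem_insert _ _)) _)
  have hmap : rename Fin.succ _ ∈ (Algebra.adjoin R T).map (rename Fin.succ) := ⟨_, h j, rfl⟩
  rw [AlgHom.map_adjoin] at hmap
  exact Algebra.adjoin_mono (Set.subset_insert _ _) hmap

end Fin

end CommSemiring

section CommRing
variable [CommRing R]

theorem IsSymmetric.mem_adjoin_esymm [Fintype ι] {p : MvPolynomial ι R} (hp : p.IsSymmetric) :
    p ∈ Algebra.adjoin R (Set.range (esymm ι R)) := by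
  obtain ⟨q, hq⟩ := esymmAlgHom_surjective R (le_refl (Fintype.card ι)) ⟨p, hp⟩
  rw [Subtype.ext_iff, esymmAlgHom_apply] at hq
  rw [← show _ = p from hq]
  have hq' : aeval (fun i : Fin (Fintype.card ι) => esymm ι R (i + 1)) q ∈
      Algebra.adjoin R (Set.range fun i : Fin (Fintype.card ι) => esymm ι R (i + 1)) := by
    rw [Algebra.adjoin_range_eq_range_aeval]
    exact ⟨q, rfl⟩
  exact Algebra.adjoin_mono (Set.range_comp_subset_range _ _) hq'

/-- Invariance under the hyperoctahedral group `{±1}^ι ⋊ S_ι` of signed permutations. -/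
def IsSignedSymmetric (p : MvPolynomial ι R) : Prop :=
  ∀ ε : ι → R, (∀ i, ε i = 1 ∨ ε i = -1) → ∀ σ : Equiv.Perm ι, signedRename ε σ p = p

section Fintype
variable [Fintype ι] [NoZeroDivisors R] [CharZero R] {p : MvPolynomial ι R}

theorem IsSignedSymmetric.two_dvd_of_mem_support (hp : IsSignedSymmetric p) {d : ι →₀ ℕ}
    (hd : d ∈ p.support) (i : ι) : 2 ∣ d i := by
  classical
  by_contra hodd
  let ε : ι → R := fun j => if j = i then -1 else 1
  have hcoeff := congrArg (coeff d) (hp ε (fun j => by by_cases j = i <;> simp [ε, *]) 1)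
  rw [coeff_signedRename_one] at hcoeff
  simp only [ε, ite_pow, one_pow, Finset.prod_ite_eq', Finset.mem_univ, if_true,
    (Nat.odd_iff.2 (Nat.two_dvd_ne_zero.1 hodd)).neg_one_pow, neg_one_mul, neg_eq_self] at hcoeff
  exact mem_support_iff.1 hd hcoeff

theorem IsSignedSymmetric.mem_adjoin_expand_esymm (hp : IsSignedSymmetric p) :
    p ∈ Algebra.adjoin R (Set.range fun k => expand 2 (esymm ι R k)) := by
  obtain ⟨q, rfl⟩ := (AlgHom.mem_range _).1 <|
    mem_range_expand_of_dvd fun d hd i => hp.two_dvd_of_mem_support hd i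
  have hq : q.IsSymmetric := fun σ => expand_injective two_pos <| by
    rw [← signedRename_expand_two (ε := 1) (by simp), hp 1 (by simp) σ]
  have hmap : expand 2 q ∈ (Algebra.adjoin R (Set.range (esymm ι R))).map (expand 2) :=
    ⟨q, hq.mem_adjoin_esymm, rfl⟩
  rwa [AlgHom.map_adjoin, ← Set.range_comp] at hmap

end Fintype

section Fin
variable {m : ℕ}

theorem rename_succ_expand_esymm_mem_adjoin (k : ℕ) :
    rename Fin.succ (expand 2 (esymm (Fin m) R k)) ∈
      Algebra.adjoin R (insert (X 0) (Set.range fun k => expand 2 (esymm (Fin (m + 1)) R k))) := by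
  induction k with
  | zero => simp [one_mem]
  | succ k ih =>
    have hsucc : rename Fin.succ (expand 2 (esymm (Fin m) R (k + 1))) =
        expand 2 (esymm (Fin (m + 1)) R (k + 1)) -
          X 0 ^ 2 * rename Fin.succ (expand 2 (esymm (Fin m) R k)) := by
      rw [esymm_fin_succ]
      simp only [rename_expand, map_add, map_mul, expand_X]
      ring
    rw [hsucc]
    exact sub_mem (Algebra.subset_adjoin (Set.mem_insert_of_mem _ ⟨_, rfl⟩))
      (mul_mem (pow_mem (Algebra.subset_adjoin (Set.mem_insert _ _)) 2) ih)

/-- The signed permutations `(Fin.cons 1 ε, decomposeFin.symm (0, σ))` form the stabilizer of the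
first basis vector. -/
theorem mem_adjoin_X_zero_expand_esymm [NoZeroDivisors R] [CharZero R]
    {p : MvPolynomial (Fin (m + 1)) R}
    (hp : ∀ ε : Fin m → R, (∀ i, ε i = 1 ∨ ε i = -1) → ∀ σ : Equiv.Perm (Fin m),
      signedRename (Fin.cons 1 ε) (Equiv.Perm.decomposeFin.symm (0, σ)) p = p) :
    p ∈ Algebra.adjoin R
      (insert (X 0) (Set.range fun k => expand 2 (esymm (Fin (m + 1)) R k))) := by
  have hcoeff (j : ℕ) : IsSignedSymmetric ((finSuccEquiv R m p).coeff j) := fun ε hε σ => by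
    rw [← Polynomial.coeff_mapAlgHom_apply, ← finSuccEquiv_signedRename_cons, hp ε hε σ]
  refine Algebra.adjoin_le ?_ (mem_adjoin_insert_X_zero_of_coeff_finSuccEquiv_mem
    fun j => (hcoeff j).mem_adjoin_expand_esymm)
  rintro _ (rfl | ⟨_, ⟨k, rfl⟩, rfl⟩)
  · exact Algebra.subset_adjoin (Set.mem_insert _ _)
  · exact rename_succ_expand_esymm_mem_adjoin k

end Fin

end CommRing

end MvPolynomial

section PolynomialFunctions
variable {ι : Type*}

noncomputable def evalFun : MvPolynomial ι ℝ →ₐ[ℝ] (EuclideanSpace ℝ ι → ℝ) :=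
  aeval fun i x => x i

theorem evalFun_apply (p : MvPolynomial ι ℝ) (x : EuclideanSpace ℝ ι) :
    evalFun p x = eval (fun i => x i) p := by
  change Pi.evalAlgHom ℝ (fun _ => ℝ) x (aeval _ p) = aeval _ p
  rw [← AlgHom.comp_apply, comp_aeval]
  rfl

theorem range_evalFun [Fintype ι] :
    (evalFun : MvPolynomial ι ℝ →ₐ[ℝ] _).range =
      Algebra.adjoin ℝ {g : EuclideanSpace ℝ ι → ℝ | ∃ l : EuclideanSpace ℝ ι →ₗ[ℝ] ℝ, g = ⇑l} := by
  classical
  apply le_antisymm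
  · rw [evalFun, ← Algebra.adjoin_range_eq_range_aeval]
    refine Algebra.adjoin_mono ?_
    rintro _ ⟨i, rfl⟩
    exact ⟨(EuclideanSpace.proj i : EuclideanSpace ℝ ι →L[ℝ] ℝ).toLinearMap, rfl⟩
  · refine Algebra.adjoin_le ?_
    rintro _ ⟨l, rfl⟩
    refine ⟨∑ i, C (l (EuclideanSpace.single i 1)) * X i, funext fun x => ?_⟩
    conv_rhs => rw [← (EuclideanSpace.basisFun ι ℝ).sum_repr x]
    simp [evalFun_apply, mul_comm]

theorem isPolyFun_iff_mem_range_evalFun [Fintype ι] {f : EuclideanSpace ℝ ι → ℝ} :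
    IsPolyFun f ↔ f ∈ (evalFun : MvPolynomial ι ℝ →ₐ[ℝ] _).range := by
  rw [range_evalFun]
  rfl

theorem evalFun_expand_esymm_one [Fintype ι] (x : EuclideanSpace ℝ ι) :
    evalFun (expand 2 (esymm ι ℝ 1)) x = ‖x‖ ^ 2 := by
  simp [evalFun_apply, esymm_one, EuclideanSpace.norm_sq_eq]

theorem evalFun_X [Fintype ι] [DecidableEq ι] (i : ι) :
    evalFun (X i) = (2⁻¹ : ℝ) •
      ((fun x => ‖x + EuclideanSpace.single i 1‖ ^ 2) - (fun x => ‖x‖ ^ 2) - 1) := by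
  funext x
  simp [evalFun_apply, norm_add_sq_real, EuclideanSpace.inner_single_right]
  ring

end PolynomialFunctions

section SignedPermutations
variable {n : ℕ}

theorem evalFun_sgnPerm (ε : Fin n → ℝ) (σ : Equiv.Perm (Fin n)) (p : MvPolynomial (Fin n) ℝ)
    (x : EuclideanSpace ℝ (Fin n)) :
    evalFun p (sgnPerm ε σ x) = evalFun (signedRename ε σ p) x := by
  rw [evalFun_apply, evalFun_apply, eval_signedRename]
  rfl

theorem signedRename_eq_self_of_evalFun {ε : Fin n → ℝ} {σ : Equiv.Perm (Fin n)}
    {p : MvPolynomial (Fin n) ℝ} (h : ∀ x, evalFun p (sgnPerm ε σ x) = evalFun p x) :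
    signedRename ε σ p = p :=
  funext fun x => by
    have hx := h (WithLp.toLp 2 x)
    rwa [evalFun_sgnPerm, evalFun_apply, evalFun_apply] at hx

theorem isWInv_evalFun_expand_esymm (k : ℕ) :
    IsWInv (evalFun (expand 2 (esymm (Fin n) ℝ k))) := fun ε hε σ x => by
  rw [evalFun_sgnPerm, signedRename_expand_two (fun i => by rcases hε i with h | h <;> simp [h]),
    esymm_isSymmetric _ _ _ σ]

theorem sgnPerm_cons_one_single_zero {m : ℕ} (ε : Fin m → ℝ) (σ : Equiv.Perm (Fin m)) :
    sgnPerm (Fin.cons 1 ε) (Equiv.Perm.decomposeFin.symm (0, σ)) (EuclideanSpace.single 0 1) =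
      EuclideanSpace.single 0 1 := by
  ext i
  cases i using Fin.cases <;> simp [sgnPerm]

end SignedPermutations

theorem BC_stabilizer_of_b_invariants_generated
    (n : ℕ) (hn : 2 ≤ n)
    (b : EuclideanSpace ℝ (Fin n))
    (hb : ∀ i : Fin n, b i = if (i : ℕ) = 0 then (1 : ℝ) else 0)
    (f : EuclideanSpace ℝ (Fin n) → ℝ) (hf : IsPolyFun f)
    -- `f` is invariant under the stabilizer `W_b` of `b` in `W`
    (hinv : ∀ (ε : Fin n → ℝ), (∀ i, ε i = 1 ∨ ε i = -1) → ∀ σ : Equiv.Perm (Fin n),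
      sgnPerm ε σ b = b → ∀ x, f (sgnPerm ε σ x) = f x) :
    f ∈ Algebra.adjoin ℝ
      ({g : EuclideanSpace ℝ (Fin n) → ℝ | IsPolyFun g ∧ IsWInv g} ∪
       {g : EuclideanSpace ℝ (Fin n) → ℝ | ∃ h : EuclideanSpace ℝ (Fin n) → ℝ,
          (IsPolyFun h ∧ IsWInv h) ∧ g = fun v => h (v + b)}) := by
  obtain ⟨m, rfl⟩ : ∃ m, n = m + 1 := ⟨n - 1, by omega⟩
  obtain rfl : b = EuclideanSpace.single 0 1 := by
    ext i
    rw [hb, PiLp.single_apply]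
    simp only [Fin.ext_iff, Fin.val_zero]
  obtain ⟨P, rfl⟩ := (AlgHom.mem_range _).1 (isPolyFun_iff_mem_range_evalFun.1 hf)
  have hP := mem_adjoin_X_zero_expand_esymm fun ε hε σ => signedRename_eq_self_of_evalFun <|
    hinv _ (Fin.cases (Or.inl rfl) hε) _ (sgnPerm_cons_one_single_zero ε σ)
  have hmap : evalFun P ∈ (Algebra.adjoin ℝ _).map evalFun := ⟨P, hP, rfl⟩
  rw [AlgHom.map_adjoin] at hmap
  refine Algebra.adjoin_le ?_ hmap
  have hW (k : ℕ) : IsPolyFun (evalFun (expand 2 (esymm (Fin (m + 1)) ℝ k))) ∧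
      IsWInv (evalFun (expand 2 (esymm (Fin (m + 1)) ℝ k))) :=
    ⟨isPolyFun_iff_mem_range_evalFun.2 ⟨_, rfl⟩, isWInv_evalFun_expand_esymm k⟩
  rintro _ ⟨_, rfl | ⟨k, rfl⟩, rfl⟩
  · have hnorm : (fun x => ‖x‖ ^ 2) = evalFun (expand 2 (esymm (Fin (m + 1)) ℝ 1)) :=
      funext fun x => (evalFun_expand_esymm_one x).symm
    rw [evalFun_X, hnorm]
    refine Subalgebra.smul_mem _ (sub_mem (sub_mem ?_ ?_) (one_mem _)) _
    · exact Algebra.subset_adjoin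
        (Or.inr ⟨_, hW 1, funext fun v => (evalFun_expand_esymm_one _).symm⟩)
    · exact Algebra.subset_adjoin (Or.inl (hW 1))
  · exact Algebra.subset_adjoin (Or.inl (hW k))
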